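/- With the distance-algorithm invariant that c + s_c ∈ span(measurements) for all c ∈ C, every element u ∈ span(C) ∩ span(V) yields an unmasked stabilizer: writing s_u for the stabilizer associated with u, both u (as an element of span(V)) and u + s_u have outcomes determined by measurement outcomes, hence the outcome O(s_u) = O(u)·O(u·s_u) of the original stabilizer s_u ∈ ⟨S_0⟩ is determined by the measurement record. -/

import Mathlib

abbrev PauliVec (n : ℕ) := (Fin n → ZMod 2) × (Fin n → ZMod 2)

def sympl {n : ℕ} (v w : PauliVec n) : ZMod 2 :=
  ∑ i, (v.1 i * w.2 i + v.2 i * w.1 i)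

/-- The state of the distance algorithm: `C` is the list of evolved stabilizer
generators, each paired with its associated original stabilizer; `V` is the list
of accumulated (updated) measurement operators; `meas` records all measurement
operators performed so far. -/
structure AlgState (n : ℕ) where
  C : List (PauliVec n × PauliVec n)
  V : List (PauliVec n)
  meas : List (PauliVec n)

/-- Initial state of the distance algorithm: `C = S₀` (each generator associated
with itself), `V` empty, no measurements yet. -/
def initState {n : ℕ} (S₀ : List (PauliVec n)) : AlgState n :=
  ⟨S₀.map fun s => (s, s), [], []⟩

/-- One step of the distance algorithm, processing the measurement `m` according
to cases 1–4 (depending on which elements of `C` and `V` anticommute with `m`). -/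
inductive Step {n : ℕ} : AlgState n → PauliVec n → AlgState n → Prop
  | case1 (σ : AlgState n) (m : PauliVec n)
      (hC : ∀ cs ∈ σ.C, sympl cs.1 m = 0) (hV : ∀ v ∈ σ.V, sympl v m = 0) :
      Step σ m ⟨σ.C, σ.V ++ [m], σ.meas ++ [m]⟩
  | case2 (σ : AlgState n) (m : PauliVec n) (cj : PauliVec n × PauliVec n)
      (hcj : cj ∈ σ.C) (hanti : sympl cj.1 m = 1)
      (hV : ∀ v ∈ σ.V, sympl v m = 0) :
      Step σ m ⟨(σ.C.erase cj).map fun cs =>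
          if sympl cs.1 m = 1 then (cs.1 + cj.1, cs.2 + cj.2) else cs,
        σ.V ++ [m], σ.meas ++ [m]⟩
  | case3 (σ : AlgState n) (m : PauliVec n) (mj : PauliVec n)
      (hmj : mj ∈ σ.V) (hanti : sympl mj m = 1)
      (hC : ∀ cs ∈ σ.C, sympl cs.1 m = 0) :
      Step σ m ⟨σ.C,
        ((σ.V.erase mj).map fun v => if sympl v m = 1 then v + mj else v) ++ [m],
        σ.meas ++ [m]⟩
  | case4 (σ : AlgState n) (m : PauliVec n) (mj : PauliVec n)
      (hmj : mj ∈ σ.V) (hanti : sympl mj m = 1)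
      (cj : PauliVec n × PauliVec n) (hcj : cj ∈ σ.C) (hcanti : sympl cj.1 m = 1) :
      Step σ m ⟨σ.C.map fun cs =>
          if sympl cs.1 m = 1 then (cs.1 + mj, cs.2) else cs,
        ((σ.V.erase mj).map fun v => if sympl v m = 1 then v + mj else v) ++ [m],
        σ.meas ++ [m]⟩

/-- Running the distance algorithm on a list of measurements. -/
inductive RunList {n : ℕ} : AlgState n → List (PauliVec n) → AlgState n → Prop
  | nil (σ : AlgState n) : RunList σ [] σ
  | cons {σ σ' σ'' : AlgState n} {m : PauliVec n} {ms : List (PauliVec n)} :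
      Step σ m σ' → RunList σ' ms σ'' → RunList σ (m :: ms) σ''

open Submodule in
/-- The `F₂`-span of a list of Pauli vectors. -/
def listSpan {n : ℕ} (L : List (PauliVec n)) : Submodule (ZMod 2) (PauliVec n) :=
  span (ZMod 2) {v | v ∈ L}

/-! Every evolved generator `c ∈ C` differs from its associated original stabilizer `s_c`
by an element of the span of the measurements performed so far, and every element of `V`
lies in that span. Both facts hold initially (`c = s_c`, `V = ∅`) and every step of the
algorithm only adds already-known vectors, or the new measurement itself, to tracked ones.
Hence for `u = ∑ c` in `span V` we get `s_u = u + ∑ (s_c - c)` in the span of the record. -/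

theorem List.forall_mem_map_ite {α : Type*} {P p : α → Prop} [DecidablePred p] {f : α → α}
    {L : List α} (hL : ∀ x ∈ L, P x) (hf : ∀ x ∈ L, P x → P (f x)) :
    ∀ y ∈ L.map (fun x => if p x then f x else x), P y := by
  simp only [List.forall_mem_map]
  intro x hx
  split_ifs
  exacts [hf x hx (hL x hx), hL x hx]

theorem List.sum_map_snd_eq_add {M : Type*} [AddCommGroup M] (L : List (M × M)) :
    (L.map Prod.snd).sum = (L.map Prod.fst).sum + (L.map fun p => p.2 - p.1).sum := by
  rw [← List.sum_map_add]
  simp only [add_sub_cancel]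

section

variable {n : ℕ}

theorem listSpan_le_iff {L : List (PauliVec n)} {S : Submodule (ZMod 2) (PauliVec n)} :
    listSpan L ≤ S ↔ ∀ x ∈ L, x ∈ S :=
  Submodule.span_le

/-- The paper's invariant `c + s_c ∈ span(meas)`, written with `-` (the same over `F₂`). -/
def AlgState.Invariant (σ : AlgState n) : Prop :=
  (∀ cs ∈ σ.C, cs.2 - cs.1 ∈ listSpan σ.meas) ∧ ∀ v ∈ σ.V, v ∈ listSpan σ.meas

theorem initState_invariant (S₀ : List (PauliVec n)) : (initState S₀).Invariant := by
  refine ⟨?_, by simp [initState]⟩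
  simp only [initState, List.forall_mem_map, sub_self]
  exact fun _ _ => zero_mem _

theorem Step.invariant {σ σ' : AlgState n} {m : PauliVec n} (h : Step σ m σ')
    (hσ : σ.Invariant) : σ'.Invariant := by
  obtain ⟨hC, hV⟩ := hσ
  set S := listSpan (σ.meas ++ [m])
  have hle : listSpan σ.meas ≤ S := Submodule.span_mono fun x hx => List.mem_append_left _ hx
  have hm : m ∈ S := Submodule.subset_span (List.mem_append_right _ (List.mem_singleton_self m))
  replace hC : ∀ cs ∈ σ.C, cs.2 - cs.1 ∈ S := fun cs hcs => hle (hC cs hcs)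
  replace hV : ∀ v ∈ σ.V, v ∈ S := fun v hv => hle (hV v hv)
  have hV_append : ∀ v ∈ σ.V ++ [m], v ∈ S := List.forall_mem_append.2 ⟨hV, by simpa using hm⟩
  have hV_update : ∀ mj ∈ σ.V,
      ∀ v ∈ ((σ.V.erase mj).map fun v => if sympl v m = 1 then v + mj else v) ++ [m], v ∈ S := by
    intro mj hmj
    refine List.forall_mem_append.2 ⟨?_, by simpa using hm⟩
    exact List.forall_mem_map_ite (fun v hv => hV v (List.erase_subset hv))
      fun v _ hv => add_mem hv (hV mj hmj)
  cases h with
  | case1 => exact ⟨hC, hV_append⟩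
  | case2 cj hcj =>
    refine ⟨List.forall_mem_map_ite (fun cs hcs => hC cs (List.erase_subset hcs)) ?_, hV_append⟩
    intro cs _ hcs
    rw [show cs.2 + cj.2 - (cs.1 + cj.1) = (cs.2 - cs.1) + (cj.2 - cj.1) by abel]
    exact add_mem hcs (hC cj hcj)
  | case3 mj hmj => exact ⟨hC, hV_update mj hmj⟩
  | case4 mj hmj =>
    refine ⟨List.forall_mem_map_ite hC ?_, hV_update mj hmj⟩
    intro cs _ hcs
    rw [show cs.2 - (cs.1 + mj) = (cs.2 - cs.1) - mj by abel]
    exact sub_mem hcs (hV mj hmj)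

theorem RunList.invariant {σ σ' : AlgState n} {ms : List (PauliVec n)} (h : RunList σ ms σ')
    (hσ : σ.Invariant) : σ'.Invariant := by
  induction h with
  | nil => exact hσ
  | cons hstep _ ih => exact ih (hstep.invariant hσ)

end

theorem unmasked_syndrome_known_general {n : ℕ} (S₀ : List (PauliVec n))
    (ms : List (PauliVec n)) (σ : AlgState n)
    (hrun : RunList (initState S₀) ms σ)
    (sub : List (PauliVec n × PauliVec n)) (hsub : sub.Sublist σ.C)
    (hu : (sub.map Prod.fst).sum ∈ listSpan σ.V) :
    (sub.map Prod.snd).sum ∈ listSpan σ.meas := by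
  obtain ⟨hC, hV⟩ := hrun.invariant (initState_invariant S₀)
  have hgap : (sub.map fun cs => cs.2 - cs.1).sum ∈ listSpan σ.meas :=
    list_sum_mem (List.forall_mem_map.2 fun cs hcs => hC cs (hsub.subset hcs))
  rw [List.sum_map_snd_eq_add]
  exact add_mem (listSpan_le_iff.2 hV hu) hgap

/-- every element `u ∈ span(C) ∩ span(V)` yields an unmasked
stabilizer.  Concretely, if a subcollection of `C` has sum of evolved parts
`u` lying in `span(V)`, then the sum `s_u` of the associated stabilizers lies in
the span of the performed measurements: both `u` and `u + s_u` have outcomes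
determined by the measurement record, hence so does `O(s_u) = O(u)·O(u·s_u)`. -/
theorem unmasked_syndrome_known {n : ℕ} (S₀ : List (PauliVec n))
    (hiso : ∀ x ∈ listSpan S₀, ∀ y ∈ listSpan S₀, sympl x y = 0)
    (ms : List (PauliVec n)) (σ : AlgState n)
    (hrun : RunList (initState S₀) ms σ)
    (sub : List (PauliVec n × PauliVec n)) (hsub : sub.Sublist σ.C)
    (hu : (sub.map Prod.fst).sum ∈ listSpan σ.V) :
    (sub.map Prod.snd).sum ∈ listSpan σ.meas :=
  unmasked_syndrome_known_general S₀ ms σ hrun sub hsub hu
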